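/- arXiv:2312.16718 — 2 statements merged into one kernel-verified Lean document; each statement's English description precedes it below -/
import Mathlib

section
/- Let (X, ρ, μ) be a doubling metric measure space with doubling dimension d. If τ > 2d, then there exists a constant c = c(τ) > 0 such that for all x, z ∈ X and r > 0: ∫_X V(y,r)^{−1} (1 + ρ(x,y)/r)^{−τ} (1 + ρ(y,z)/r)^{−τ} dμ(y) ≤ c (1 + ρ(x,z)/r)^{−τ}. -/
open MeasureTheory Metric
open scoped ENNReal

/-- Constant bound for a set lintegral over an arbitrary (possibly non-measurable) set. -/
private lemma setLIntegral_le_const' {α : Type*} [MeasurableSpace α] (μ : Measure α)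
    (s : Set α) (f : α → ℝ≥0∞) (c : ℝ≥0∞) (h : ∀ y ∈ s, f y ≤ c) :
    ∫⁻ y in s, f y ∂μ ≤ c * μ s := by
  rw [MeasureTheory.lintegral_def]
  refine iSup_le fun g => iSup_le fun hg => ?_
  rw [SimpleFunc.lintegral]
  calc ∑ x ∈ g.range, x * (μ.restrict s) (g ⁻¹' {x})
      ≤ ∑ x ∈ g.range, c * (μ.restrict s) (g ⁻¹' {x}) := by
        refine Finset.sum_le_sum fun b _ => ?_
        rcases eq_or_ne ((μ.restrict s) (g ⁻¹' {b})) 0 with h0 | h0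
        · simp [h0]
        · have hb : ∃ y ∈ s, g y = b := by
            by_contra hc
            push_neg at hc
            refine h0 ?_
            rw [Measure.restrict_apply (g.measurableSet_fiber b)]
            have : g ⁻¹' {b} ∩ s = ∅ := by
              ext y
              simp only [Set.mem_inter_iff, Set.mem_preimage, Set.mem_singleton_iff,
                Set.mem_empty_iff_false, iff_false, not_and]
              exact fun hyb hys => hc y hys hyb
            rw [this]
            exact measure_empty
          obtain ⟨y, hys, hyb⟩ := hb
          exact mul_le_mul_left (hyb ▸ (hg y).trans (h y hys)) _
    _ = c * ∑ x ∈ g.range, (μ.restrict s) (g ⁻¹' {x}) := (Finset.mul_sum _ _ _).symm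
    _ = c * (μ.restrict s) Set.univ := by
        rw [SimpleFunc.sum_range_measure_preimage_singleton]
    _ = c * μ s := by rw [Measure.restrict_apply_univ]

private def annuli {X : Type*} [MetricSpace X] (x : X) (r : ℝ) : ℕ → Set X
  | 0 => ball x r
  | (k+1) => ball x (2 ^ (k+1) * r) \ ball x (2 ^ k * r)

/-- Main annuli estimate: on any set `s`, any function dominated by
`κ * V(y,r)⁻¹ (1+dist x y/r)^(-τ)` on `s` has set-lintegral at most `κ * C`. -/
private lemma auxA {X : Type*} [MetricSpace X] [MeasurableSpace X]
    (μ : Measure X) (d chat : ℝ)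
    (hV : ∀ (x : X) (r : ℝ), 0 < r → 0 < μ (ball x r) ∧ μ (ball x r) < ⊤)
    (hdoubling : ∀ (x : X) (r lam : ℝ), 0 < r → 1 ≤ lam →
      μ (ball x (lam * r)) ≤ ENNReal.ofReal (chat * lam ^ d) * μ (ball x r))
    (τ : ℝ) (hτ0 : 0 < τ) (hchat : 0 < chat)
    (x : X) (r : ℝ) (hr : 0 < r) (κ : ℝ≥0∞) (s : Set X) (g : X → ℝ≥0∞)
    (hg : ∀ y ∈ s, g y ≤ κ * ((μ (ball y r))⁻¹ *
      ENNReal.ofReal ((1 + dist x y / r) ^ (-τ)))) :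
    ∫⁻ y in s, g y ∂μ ≤
      κ * (ENNReal.ofReal (chat * 2 ^ (d + τ)) *
        (1 - ENNReal.ofReal ((2:ℝ) ^ (d - τ)))⁻¹) := by
  classical
  set A : ℕ → Set X := annuli x r with hA
  have hA0 : A 0 = ball x r := rfl
  have hAs : ∀ k : ℕ, A (k+1) = ball x (2 ^ (k+1) * r) \ ball x (2 ^ k * r) := fun k => rfl
  have hsub : ∀ k, A k ⊆ ball x (2 ^ k * r) := by
    intro k
    match k with
    | 0 => rw [hA0]; simp
    | (k+1) => rw [hAs k]; exact Set.diff_subset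
  have hcover : s ⊆ ⋃ k, (s ∩ A k) := by
    intro y hy
    have hex : ∃ n : ℕ, dist x y < 2 ^ n * r := by
      obtain ⟨n, hn⟩ := pow_unbounded_of_one_lt (dist x y / r) (one_lt_two (α := ℝ))
      exact ⟨n, by rwa [div_lt_iff₀ hr] at hn⟩
    have hspec : dist x y < 2 ^ (Nat.find hex) * r := Nat.find_spec hex
    refine Set.mem_iUnion.2 ?_
    cases he : Nat.find hex with
    | zero =>
      rw [he] at hspec
      refine ⟨0, hy, ?_⟩
      rw [hA0]
      exact mem_ball'.2 (by simpa using hspec)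
    | succ m =>
      rw [he] at hspec
      have hmin : ¬ dist x y < 2 ^ m * r := Nat.find_min hex (by omega)
      refine ⟨m+1, hy, ?_⟩
      rw [hAs m]
      exact ⟨mem_ball'.2 hspec, fun h => hmin (mem_ball'.1 h)⟩
  have hlow : ∀ k : ℕ, ∀ y ∈ A k, (2:ℝ) ^ ((k:ℝ) - 1) ≤ 1 + dist x y / r := by
    intro k y hy
    have hd0 : 0 ≤ dist x y / r := div_nonneg dist_nonneg hr.le
    match k with
    | 0 =>
      have : (2:ℝ) ^ ((0:ℝ) - 1) ≤ 1 :=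
        Real.rpow_le_one_of_one_le_of_nonpos one_le_two (by norm_num)
      push_cast
      linarith
    | (k+1) =>
      rw [hAs k] at hy
      have hge : (2:ℝ) ^ k * r ≤ dist x y := not_lt.1 (fun h => hy.2 (mem_ball'.2 h))
      have h2 : (2:ℝ) ^ k ≤ dist x y / r := (le_div_iff₀ hr).2 hge
      have hcast : (((k+1:ℕ)):ℝ) - 1 = ((k:ℕ):ℝ) := by push_cast; ring
      rw [hcast, Real.rpow_natCast]
      linarith
  have hk : ∀ k : ℕ, ∫⁻ y in s ∩ A k, g y ∂μ ≤
      κ * ENNReal.ofReal (chat * 2 ^ (d + τ) * ((2:ℝ) ^ (d - τ)) ^ k) := by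
    intro k
    set R : ℝ := 2 ^ k * r with hR
    have hRpos : 0 < R := by positivity
    set M : ℝ≥0∞ := μ (ball x R) with hM
    have hM0 : M ≠ 0 := (hV x R hRpos).1.ne'
    have hMtop : M ≠ ⊤ := (hV x R hRpos).2.ne
    set c' : ℝ≥0∞ := ENNReal.ofReal (chat * ((2:ℝ) ^ (k+1)) ^ d) with hc'
    set E : ℝ≥0∞ := ENNReal.ofReal ((2:ℝ) ^ ((1 - (k:ℝ)) * τ)) with hE
    have hpt : ∀ y ∈ s ∩ A k, g y ≤ κ * (c' * M⁻¹ * E) := by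
      intro y hy
      have hyb : dist x y < R := mem_ball'.1 (hsub k hy.2)
      have hball : ball x R ⊆ ball y ((2:ℝ) ^ (k+1) * r) := by
        intro w hw
        have hw' : dist x w < R := mem_ball'.1 hw
        have ht : dist w y ≤ dist x w + dist x y := by
          rw [dist_comm x w]
          exact dist_triangle w x y
        rw [mem_ball]
        calc dist w y < R + R := by linarith
          _ = (2:ℝ) ^ (k+1) * r := by rw [hR]; ring
      have h1le : (1:ℝ) ≤ 2 ^ (k+1) := by
        have := pow_le_pow_right₀ (a := (2:ℝ)) one_le_two (Nat.zero_le (k+1))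
        simpa using this
      have hdbl : M ≤ c' * μ (ball y r) := by
        calc M ≤ μ (ball y ((2:ℝ) ^ (k+1) * r)) := measure_mono hball
          _ ≤ ENNReal.ofReal (chat * ((2:ℝ) ^ (k+1)) ^ d) * μ (ball y r) :=
              hdoubling y r ((2:ℝ) ^ (k+1)) hr h1le
      have hm0 : μ (ball y r) ≠ 0 := (hV y r hr).1.ne'
      have hmm : (μ (ball y r))⁻¹ * μ (ball y r) ≤ 1 := by
        rcases eq_or_ne (μ (ball y r)) ⊤ with h | h
        · simp [h]
        · rw [ENNReal.inv_mul_cancel hm0 h]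
      have hinv : (μ (ball y r))⁻¹ ≤ c' * M⁻¹ := by
        rw [show c' * M⁻¹ = c' / M from (div_eq_mul_inv c' M).symm,
          ENNReal.le_div_iff_mul_le (Or.inl hM0) (Or.inl hMtop)]
        calc (μ (ball y r))⁻¹ * M ≤ (μ (ball y r))⁻¹ * (c' * μ (ball y r)) :=
              mul_le_mul_right hdbl _
          _ = c' * ((μ (ball y r))⁻¹ * μ (ball y r)) := by ring
          _ ≤ c' * 1 := mul_le_mul_right hmm _
          _ = c' := mul_one _
      have hfac : ENNReal.ofReal ((1 + dist x y / r) ^ (-τ)) ≤ E := by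
        apply ENNReal.ofReal_le_ofReal
        have hbpos : (0:ℝ) < 2 ^ ((k:ℝ) - 1) := Real.rpow_pos_of_pos two_pos _
        calc (1 + dist x y / r) ^ (-τ) ≤ ((2:ℝ) ^ ((k:ℝ) - 1)) ^ (-τ) :=
              Real.rpow_le_rpow_of_nonpos hbpos (hlow k y hy.2) (neg_nonpos.2 hτ0.le)
          _ = (2:ℝ) ^ ((1 - (k:ℝ)) * τ) := by
              rw [← Real.rpow_mul two_pos.le]
              congr 1
              ring
      exact (hg y hy.1).trans (mul_le_mul_right (mul_le_mul' hinv hfac) κ)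
    calc ∫⁻ y in s ∩ A k, g y ∂μ ≤ κ * (c' * M⁻¹ * E) * μ (s ∩ A k) :=
          setLIntegral_le_const' μ _ _ _ hpt
      _ ≤ κ * (c' * M⁻¹ * E) * M :=
          mul_le_mul_right (measure_mono ((Set.inter_subset_right).trans (hsub k))) _
      _ = κ * (c' * E) * (M⁻¹ * M) := by ring
      _ = κ * (c' * E) := by rw [ENNReal.inv_mul_cancel hM0 hMtop, mul_one]
      _ ≤ κ * ENNReal.ofReal (chat * 2 ^ (d + τ) * ((2:ℝ) ^ (d - τ)) ^ k) := by
          refine mul_le_mul_right ?_ κ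
          rw [hc', hE, ← ENNReal.ofReal_mul (by positivity)]
          apply ENNReal.ofReal_le_ofReal
          apply le_of_eq
          have e1 : ((2:ℝ) ^ (k+1) : ℝ) ^ d = (2:ℝ) ^ ((((k+1:ℕ)):ℝ) * d) := by
            rw [← Real.rpow_natCast 2 (k+1), ← Real.rpow_mul two_pos.le]
          have e2 : ((2:ℝ) ^ (d - τ)) ^ k = (2:ℝ) ^ ((d - τ) * k) := by
            rw [← Real.rpow_natCast ((2:ℝ) ^ (d - τ)) k, ← Real.rpow_mul two_pos.le]
          rw [e1, e2, mul_assoc, mul_assoc, ← Real.rpow_add two_pos, ← Real.rpow_add two_pos]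
          congr 2
          push_cast
          ring
  calc ∫⁻ y in s, g y ∂μ ≤ ∫⁻ y in ⋃ k, (s ∩ A k), g y ∂μ :=
        lintegral_mono' (Measure.restrict_mono hcover le_rfl) le_rfl
    _ ≤ ∑' k, ∫⁻ y in s ∩ A k, g y ∂μ := lintegral_iUnion_le _ _
    _ ≤ ∑' k, κ * ENNReal.ofReal (chat * 2 ^ (d + τ) * ((2:ℝ) ^ (d - τ)) ^ k) :=
        ENNReal.tsum_le_tsum hk
    _ = κ * (ENNReal.ofReal (chat * 2 ^ (d + τ)) *
        (1 - ENNReal.ofReal ((2:ℝ) ^ (d - τ)))⁻¹) := by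
        have hq0 : (0:ℝ) ≤ (2:ℝ) ^ (d - τ) := (Real.rpow_pos_of_pos two_pos _).le
        have hterm : ∀ k : ℕ, κ * ENNReal.ofReal (chat * 2 ^ (d + τ) * ((2:ℝ) ^ (d - τ)) ^ k) =
            κ * ENNReal.ofReal (chat * 2 ^ (d + τ)) *
              (ENNReal.ofReal ((2:ℝ) ^ (d - τ))) ^ k := by
          intro k
          rw [ENNReal.ofReal_mul (by positivity), ENNReal.ofReal_pow hq0, mul_assoc]
        simp_rw [hterm]
        rw [ENNReal.tsum_mul_left, ENNReal.tsum_geometric, mul_assoc]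


/-- Integral estimate in a doubling metric measure space: for `τ > 2d`,
`∫_X V(y,r)^{-1} (1+ρ(x,y)/r)^{-τ} (1+ρ(y,z)/r)^{-τ} dμ(y) ≤ c (1+ρ(x,z)/r)^{-τ}`. -/
theorem stmt_4 {X : Type*} [MetricSpace X] [MeasurableSpace X]
    (μ : Measure X) (d chat : ℝ) (hchat : 0 < chat)
    (hV : ∀ (x : X) (r : ℝ), 0 < r → 0 < μ (ball x r) ∧ μ (ball x r) < ⊤)
    (hdoubling : ∀ (x : X) (r lam : ℝ), 0 < r → 1 ≤ lam →
      μ (ball x (lam * r)) ≤ ENNReal.ofReal (chat * lam ^ d) * μ (ball x r))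
    (τ : ℝ) (hτ : 2 * d < τ) :
    ∃ c : ℝ, 0 < c ∧ ∀ (x z : X) (r : ℝ), 0 < r →
      (∫ y, ((μ (ball y r)).toReal)⁻¹ *
          ((1 + dist x y / r) ^ (-τ) * (1 + dist y z / r) ^ (-τ)) ∂μ) ≤
        c * (1 + dist x z / r) ^ (-τ) := by
  rcases isEmpty_or_nonempty X with hX | hX
  · exact ⟨1, one_pos, fun x z r hr => (IsEmpty.false x).elim⟩
  obtain ⟨x0⟩ := hX
  -- Step 1: `d` must be nonnegative.
  have hd0 : 0 ≤ d := by
    by_contra hneg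
    push_neg at hneg
    set lam : ℝ := max 1 (Real.exp ((Real.log chat + 1) / (-d))) with hlam
    have hl1 : 1 ≤ lam := le_max_left _ _
    have hlpos : 0 < lam := lt_of_lt_of_le one_pos hl1
    have hloglam : (Real.log chat + 1) / (-d) ≤ Real.log lam := by
      have h1 : Real.exp ((Real.log chat + 1) / (-d)) ≤ lam := le_max_right _ _
      calc (Real.log chat + 1) / (-d)
          = Real.log (Real.exp ((Real.log chat + 1) / (-d))) := (Real.log_exp _).symm
        _ ≤ Real.log lam := (Real.log_le_log_iff (Real.exp_pos _) hlpos).2 h1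
    have hkey : d * Real.log lam ≤ -(Real.log chat + 1) := by
      have h2 : d * Real.log lam ≤ d * ((Real.log chat + 1) / (-d)) :=
        mul_le_mul_of_nonpos_left hloglam hneg.le
      have hdne : d ≠ 0 := ne_of_lt hneg
      have h3 : d * ((Real.log chat + 1) / (-d)) = -(Real.log chat + 1) := by
        rw [div_neg, mul_neg, ← mul_div_assoc, mul_comm d, mul_div_assoc, div_self hdne,
          mul_one]
      linarith
    have hlt1 : chat * lam ^ d < 1 := by
      have hle : lam ^ d ≤ Real.exp (-(Real.log chat + 1)) := by
        rw [Real.rpow_def_of_pos hlpos, mul_comm]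
        exact Real.exp_le_exp.2 hkey
      have he : Real.exp (-(Real.log chat + 1)) = chat⁻¹ * Real.exp (-1) := by
        rw [neg_add, Real.exp_add, Real.exp_neg, Real.exp_log hchat]
      have hle2 : chat * lam ^ d ≤ Real.exp (-1) := by
        calc chat * lam ^ d ≤ chat * (chat⁻¹ * Real.exp (-1)) := by
              rw [← he]; exact mul_le_mul_of_nonneg_left hle hchat.le
          _ = Real.exp (-1) := by field_simp
      have : Real.exp (-1) < 1 := Real.exp_lt_one_iff.2 (by norm_num)
      linarith
    have hB0 : μ (ball x0 1) ≠ 0 := (hV x0 1 one_pos).1.ne'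
    have hBtop : μ (ball x0 1) ≠ ⊤ := (hV x0 1 one_pos).2.ne
    have hmono : μ (ball x0 1) ≤ μ (ball x0 (lam * 1)) :=
      measure_mono (ball_subset_ball (by linarith))
    have hd2 := hdoubling x0 1 lam one_pos hl1
    have hlt : ENNReal.ofReal (chat * lam ^ d) * μ (ball x0 1) < μ (ball x0 1) := by
      have h1 : ENNReal.ofReal (chat * lam ^ d) < 1 := ENNReal.ofReal_lt_one.2 hlt1
      calc ENNReal.ofReal (chat * lam ^ d) * μ (ball x0 1) < 1 * μ (ball x0 1) :=
            ENNReal.mul_lt_mul_left hB0 hBtop h1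
        _ = μ (ball x0 1) := one_mul _
    exact absurd (hmono.trans hd2) (not_le.2 hlt)
  have hτ0 : 0 < τ := by linarith
  have hdτ : d < τ := by linarith
  set C : ℝ≥0∞ := ENNReal.ofReal (chat * 2 ^ (d + τ)) *
      (1 - ENNReal.ofReal ((2:ℝ) ^ (d - τ)))⁻¹ with hC
  have hq1 : (2:ℝ) ^ (d - τ) < 1 :=
    Real.rpow_lt_one_of_one_lt_of_neg one_lt_two (by linarith)
  have hCtop : C ≠ ⊤ := by
    apply ENNReal.mul_ne_top ENNReal.ofReal_ne_top
    rw [ENNReal.inv_ne_top]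
    exact (tsub_pos_of_lt (ENNReal.ofReal_lt_one.2 hq1)).ne'
  have hc0 : (0:ℝ) ≤ (2:ℝ) ^ τ * 2 * C.toReal := by
    have := ENNReal.toReal_nonneg (a := C)
    have := Real.rpow_nonneg (le_of_lt two_pos) τ
    positivity
  refine ⟨(2:ℝ) ^ τ * 2 * C.toReal + 1, by linarith, fun x z r hr => ?_⟩
  set D : ℝ := dist x z with hD
  set K : ℝ := (1 + D / r) ^ (-τ) with hK
  have hDr0 : 0 ≤ D / r := div_nonneg dist_nonneg hr.le
  have hKpos : 0 < K := Real.rpow_pos_of_pos (by linarith) _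
  set F : X → ℝ := fun y => ((μ (ball y r)).toReal)⁻¹ *
      ((1 + dist x y / r) ^ (-τ) * (1 + dist y z / r) ^ (-τ)) with hF
  have hF0 : ∀ y, 0 ≤ F y := by
    intro y
    have h1 : (0:ℝ) ≤ ((μ (ball y r)).toReal)⁻¹ := inv_nonneg.2 ENNReal.toReal_nonneg
    have h2 : (0:ℝ) ≤ (1 + dist x y / r) ^ (-τ) :=
      Real.rpow_nonneg (by positivity) _
    have h3 : (0:ℝ) ≤ (1 + dist y z / r) ^ (-τ) :=
      Real.rpow_nonneg (by positivity) _
    exact mul_nonneg h1 (mul_nonneg h2 h3)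
  by_cases hm : AEStronglyMeasurable F μ
  · rw [integral_eq_lintegral_of_nonneg_ae (ae_of_all _ hF0) hm]
    set κ : ℝ≥0∞ := ENNReal.ofReal ((2:ℝ) ^ τ * K) with hκ
    have hhalf : ∀ t : ℝ, D / 2 ≤ t → (1 + t / r) ^ (-τ) ≤ (2:ℝ) ^ τ * K := by
      intro t ht
      have ht0 : 0 ≤ t := le_trans (by positivity) ht
      have hDr : D / r ≤ 2 * (t / r) := by
        rw [← mul_div_assoc]
        gcongr
        linarith
      have hhalfbase : (1 + D / r) / 2 ≤ 1 + t / r := by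
        have htr : 0 ≤ t / r := div_nonneg ht0 hr.le
        linarith
      calc (1 + t / r) ^ (-τ) ≤ ((1 + D / r) / 2) ^ (-τ) :=
            Real.rpow_le_rpow_of_nonpos (by linarith) hhalfbase (neg_nonpos.2 hτ0.le)
        _ = (2:ℝ) ^ τ * K := by
            rw [Real.div_rpow (by linarith) two_pos.le, hK,
              Real.rpow_neg two_pos.le τ, div_inv_eq_mul, mul_comm]
    set E : Set X := {y | D / 2 ≤ dist x y} with hEdef
    have hofF : ∀ y, ENNReal.ofReal (F y) = (μ (ball y r))⁻¹ *
        (ENNReal.ofReal ((1 + dist x y / r) ^ (-τ)) *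
          ENNReal.ofReal ((1 + dist y z / r) ^ (-τ))) := by
      intro y
      have hB0 : μ (ball y r) ≠ 0 := (hV y r hr).1.ne'
      have hBtop : μ (ball y r) ≠ ⊤ := (hV y r hr).2.ne
      have htBpos : 0 < (μ (ball y r)).toReal := ENNReal.toReal_pos hB0 hBtop
      have h2 : (0:ℝ) ≤ (1 + dist x y / r) ^ (-τ) := Real.rpow_nonneg (by positivity) _
      rw [hF]
      simp only []
      rw [ENNReal.ofReal_mul (inv_nonneg.2 ENNReal.toReal_nonneg),
        ENNReal.ofReal_mul h2, ENNReal.ofReal_inv_of_pos htBpos,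
        ENNReal.ofReal_toReal hBtop]
    have hEpt : ∀ y ∈ E, ENNReal.ofReal (F y) ≤ κ * ((μ (ball y r))⁻¹ *
        ENNReal.ofReal ((1 + dist z y / r) ^ (-τ))) := by
      intro y hy
      have hy' : D / 2 ≤ dist x y := hy
      rw [hofF y, dist_comm z y]
      calc (μ (ball y r))⁻¹ * (ENNReal.ofReal ((1 + dist x y / r) ^ (-τ)) *
            ENNReal.ofReal ((1 + dist y z / r) ^ (-τ)))
          = ENNReal.ofReal ((1 + dist x y / r) ^ (-τ)) *
            ((μ (ball y r))⁻¹ * ENNReal.ofReal ((1 + dist y z / r) ^ (-τ))) := by ring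
        _ ≤ κ * ((μ (ball y r))⁻¹ * ENNReal.ofReal ((1 + dist y z / r) ^ (-τ))) :=
            mul_le_mul_left (ENNReal.ofReal_le_ofReal (hhalf _ hy')) _
    have hEcpt : ∀ y ∈ Eᶜ, ENNReal.ofReal (F y) ≤ κ * ((μ (ball y r))⁻¹ *
        ENNReal.ofReal ((1 + dist x y / r) ^ (-τ))) := by
      intro y hy
      have hy' : dist x y < D / 2 := not_le.1 hy
      have htri : D ≤ dist x y + dist y z := dist_triangle x y z
      have hyz : D / 2 ≤ dist y z := by linarith
      rw [hofF y]
      calc (μ (ball y r))⁻¹ * (ENNReal.ofReal ((1 + dist x y / r) ^ (-τ)) *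
            ENNReal.ofReal ((1 + dist y z / r) ^ (-τ)))
          = ENNReal.ofReal ((1 + dist y z / r) ^ (-τ)) *
            ((μ (ball y r))⁻¹ * ENNReal.ofReal ((1 + dist x y / r) ^ (-τ))) := by ring
        _ ≤ κ * ((μ (ball y r))⁻¹ * ENNReal.ofReal ((1 + dist x y / r) ^ (-τ))) :=
            mul_le_mul_left (ENNReal.ofReal_le_ofReal (hhalf _ hyz)) _
    have h1 := auxA μ d chat hV hdoubling τ hτ0 hchat z r hr κ E _ hEpt
    have h2 := auxA μ d chat hV hdoubling τ hτ0 hchat x r hr κ Eᶜ _ hEcpt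
    have hsplit : ∫⁻ y, ENNReal.ofReal (F y) ∂μ ≤
        (∫⁻ y in E, ENNReal.ofReal (F y) ∂μ) + ∫⁻ y in Eᶜ, ENNReal.ofReal (F y) ∂μ := by
      have hle : μ ≤ μ.restrict E + μ.restrict Eᶜ := by
        rw [Measure.le_iff]
        intro t ht
        rw [Measure.add_apply, Measure.restrict_apply ht, Measure.restrict_apply ht]
        calc μ t = μ ((t ∩ E) ∪ (t ∩ Eᶜ)) := by rw [Set.inter_union_compl]
          _ ≤ μ (t ∩ E) + μ (t ∩ Eᶜ) := measure_union_le _ _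
      calc ∫⁻ y, ENNReal.ofReal (F y) ∂μ
          ≤ ∫⁻ y, ENNReal.ofReal (F y) ∂(μ.restrict E + μ.restrict Eᶜ) :=
            lintegral_mono' hle le_rfl
        _ = _ := lintegral_add_measure _ _ _
    have hbound : ∫⁻ y, ENNReal.ofReal (F y) ∂μ ≤ κ * C + κ * C :=
      hsplit.trans (add_le_add h1 h2)
    have hκC : κ * C ≠ ⊤ := ENNReal.mul_ne_top ENNReal.ofReal_ne_top hCtop
    have hfin : κ * C + κ * C ≠ ⊤ := ENNReal.add_ne_top.2 ⟨hκC, hκC⟩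
    have h2K : (0:ℝ) ≤ (2:ℝ) ^ τ * K :=
      mul_nonneg (Real.rpow_nonneg two_pos.le τ) hKpos.le
    calc (∫⁻ y, ENNReal.ofReal (F y) ∂μ).toReal ≤ (κ * C + κ * C).toReal :=
          ENNReal.toReal_mono hfin hbound
      _ = (2:ℝ) ^ τ * K * C.toReal + (2:ℝ) ^ τ * K * C.toReal := by
          rw [ENNReal.toReal_add hκC hκC, ENNReal.toReal_mul, hκ,
            ENNReal.toReal_ofReal h2K]
      _ ≤ ((2:ℝ) ^ τ * 2 * C.toReal + 1) * K := by nlinarith [hKpos]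
  · have hni : ¬ Integrable F μ := fun h => hm h.aestronglyMeasurable
    rw [integral_undef hni]
    have : (0:ℝ) ≤ ((2:ℝ) ^ τ * 2 * C.toReal + 1) * K :=
      mul_nonneg (by linarith) hKpos.le
    linarith
end

section
/- Let F ∈ C^{k₁+k₂}(ℝ²) with supp F ⊂ [−1,1]², and let Φ_h be as in the polynomial-reproducing approximation setting (Φ = φ ⊗ φ with φ Schwartz, supp φ̂ ⊂ [−1,1], φ̂(0)=1, higher derivatives of φ̂ vanish at 0). Then there is a constant c > 0 such that for all x ∈ ℝ² with |x| > 3 and all h > 0: |F * Φ_h(x)| ≤ c ‖F‖_{L^∞} h^{k₁+k₂} (1 + |x|)^{−(k₁+k₂)}. -/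
open MeasureTheory

/-- Far-field estimate: for `F ∈ C^{k₁+k₂}(ℝ²)` supported in `[-1,1]²` and the
polynomial-reproducing kernel `Φ_h`, for `|x| > 3` (Euclidean norm) and `h > 0`,
`|F*Φ_h(x)| ≤ c ‖F‖_∞ h^{k₁+k₂} (1+|x|)^{-(k₁+k₂)}`. -/
theorem stmt_12 (k₁ k₂ : ℕ) (hk₁ : 1 ≤ k₁) (hk₂ : 1 ≤ k₂)
    (φ : SchwartzMap ℝ ℝ) (heven : ∀ x : ℝ, φ (-x) = φ x)
    (φhat : ℝ → ℂ)
    (hφhat : ∀ ξ : ℝ, φhat ξ = ∫ x : ℝ, (φ x : ℂ) * Complex.exp (-(Complex.I * x * ξ)))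
    (hsupp : ∀ ξ : ℝ, 1 < |ξ| → φhat ξ = 0)
    (h0 : φhat 0 = 1)
    (hder : ∀ k : ℕ, 1 ≤ k → iteratedDeriv k φhat 0 = 0) :
    ∃ c : ℝ, 0 < c ∧ ∀ F : ℝ × ℝ → ℝ, ContDiff ℝ (k₁ + k₂) F →
      Function.support F ⊆ Set.Icc ((-1, -1) : ℝ × ℝ) (1, 1) →
      ∀ M : ℝ, (∀ y : ℝ × ℝ, |F y| ≤ M) →
      ∀ h : ℝ, 0 < h → ∀ x : ℝ × ℝ, 3 < Real.sqrt (x.1 ^ 2 + x.2 ^ 2) →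
        |∫ y : ℝ × ℝ,
            F y * ((h ^ 2)⁻¹ * φ ((x.1 - y.1) / h) * φ ((x.2 - y.2) / h))| ≤
          c * M * h ^ (k₁ + k₂) *
            (1 + Real.sqrt (x.1 ^ 2 + x.2 ^ 2)) ^ (-((k₁ + k₂ : ℕ) : ℝ)) := by
  classical
  set k := k₁ + k₂ with hkdef
  obtain ⟨C, hCpos, hC⟩ := φ.decay (k + 2) 0
  obtain ⟨C₀, hC₀pos, hC₀⟩ := φ.decay 0 0
  have hφ_decay : ∀ t : ℝ, |t| ^ (k + 2) * |φ t| ≤ C := by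
    intro t
    simpa [Real.norm_eq_abs] using hC t
  have hφ_bdd : ∀ t : ℝ, |φ t| ≤ C₀ := by
    intro t
    simpa [Real.norm_eq_abs] using hC₀ t
  refine ⟨4 * 6 ^ (k + 2) * C₀ * C * 2 ^ k, by positivity, ?_⟩
  intro F hF hFsupp M hM h hh x hx
  set r := Real.sqrt (x.1 ^ 2 + x.2 ^ 2) with hr
  have hr3 : 3 < r := hx
  have hrpos : 0 < r := by linarith
  have hM0 : 0 ≤ M := le_trans (abs_nonneg _) (hM 0)
  set T : ℝ := r / (6 * h) with hT
  have hTpos : 0 < T := by positivity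
  set B : ℝ := M * ((h ^ 2)⁻¹ * ((C / T ^ (k + 2)) * C₀)) with hB
  have hB0 : 0 ≤ B := by positivity
  have hrsum : r ≤ |x.1| + |x.2| := by
    rw [hr]
    have h1 : x.1 ^ 2 + x.2 ^ 2 ≤ (|x.1| + |x.2|) ^ 2 := by
      nlinarith [sq_abs x.1, sq_abs x.2, mul_nonneg (abs_nonneg x.1) (abs_nonneg x.2)]
    calc Real.sqrt (x.1 ^ 2 + x.2 ^ 2) ≤ Real.sqrt ((|x.1| + |x.2|) ^ 2) :=
          Real.sqrt_le_sqrt h1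
      _ = |x.1| + |x.2| := Real.sqrt_sq (by positivity)
  -- pointwise bound of the integrand
  have key : ∀ y : ℝ × ℝ,
      |F y * ((h ^ 2)⁻¹ * φ ((x.1 - y.1) / h) * φ ((x.2 - y.2) / h))| ≤
        Set.indicator (Set.Icc ((-1, -1) : ℝ × ℝ) (1, 1)) (fun _ => B) y := by
    intro y
    by_cases hy : y ∈ Set.Icc ((-1, -1) : ℝ × ℝ) (1, 1)
    · rw [Set.indicator_of_mem hy]
      obtain ⟨hy1, hy2⟩ := hy
      have hy11 : -1 ≤ y.1 := hy1.1
      have hy12 : y.1 ≤ 1 := hy2.1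
      have hy21 : -1 ≤ y.2 := hy1.2
      have hy22 : y.2 ≤ 1 := hy2.2
      have habs1 : |x.1| - 1 ≤ |x.1 - y.1| := by
        have hb : |y.1| ≤ 1 := abs_le.2 ⟨hy11, hy12⟩
        have h2 := abs_sub_abs_le_abs_sub x.1 y.1
        linarith
      have habs2 : |x.2| - 1 ≤ |x.2 - y.2| := by
        have hb : |y.2| ≤ 1 := abs_le.2 ⟨hy21, hy22⟩
        have h2 := abs_sub_abs_le_abs_sub x.2 y.2
        linarith
      have hsum : r / 3 ≤ |x.1 - y.1| + |x.2 - y.2| := by linarith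
      have hmax : r / 6 ≤ |x.1 - y.1| ∨ r / 6 ≤ |x.2 - y.2| := by
        rcases le_total (|x.1 - y.1|) (|x.2 - y.2|) with hle | hle
        · right; linarith
        · left; linarith
      have hfar : ∀ t : ℝ, r / 6 ≤ |t| → |φ (t / h)| ≤ C / T ^ (k + 2) := by
        intro t ht
        have haT : T ≤ |t / h| := by
          rw [abs_div, abs_of_pos hh, hT, show r / (6 * h) = (r / 6) / h by ring]
          gcongr
        have hpow : T ^ (k + 2) ≤ |t / h| ^ (k + 2) := pow_le_pow_left₀ hTpos.le haT _
        have h1 : T ^ (k + 2) * |φ (t / h)| ≤ C :=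
          le_trans (mul_le_mul_of_nonneg_right hpow (abs_nonneg _)) (hφ_decay (t / h))
        rw [le_div_iff₀ (pow_pos hTpos _)]
        rw [mul_comm]
        exact h1
      have hprod : |φ ((x.1 - y.1) / h)| * |φ ((x.2 - y.2) / h)| ≤ (C / T ^ (k + 2)) * C₀ := by
        rcases hmax with hm | hm
        · exact mul_le_mul (hfar _ hm) (hφ_bdd _) (abs_nonneg _) (by positivity)
        · calc |φ ((x.1 - y.1) / h)| * |φ ((x.2 - y.2) / h)|
              ≤ C₀ * (C / T ^ (k + 2)) :=
                mul_le_mul (hφ_bdd _) (hfar _ hm) (abs_nonneg _) hC₀pos.le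
            _ = (C / T ^ (k + 2)) * C₀ := mul_comm _ _
      calc |F y * ((h ^ 2)⁻¹ * φ ((x.1 - y.1) / h) * φ ((x.2 - y.2) / h))|
          = |F y| * ((h ^ 2)⁻¹ * (|φ ((x.1 - y.1) / h)| * |φ ((x.2 - y.2) / h)|)) := by
            rw [abs_mul, abs_mul, abs_mul, abs_inv, abs_pow, abs_of_pos hh]; ring
        _ ≤ M * ((h ^ 2)⁻¹ * ((C / T ^ (k + 2)) * C₀)) :=
            mul_le_mul (hM y)
              (mul_le_mul_of_nonneg_left hprod (by positivity)) (by positivity) hM0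
        _ = B := rfl
    · rw [Set.indicator_of_notMem hy]
      have hFy : F y = 0 := by
        by_contra hne
        exact hy (hFsupp (Function.mem_support.2 hne))
      simp [hFy]
  -- integrability of the majorant
  have hint : Integrable
      (Set.indicator (Set.Icc ((-1, -1) : ℝ × ℝ) (1, 1)) (fun _ => B)) := by
    rw [integrable_indicator_iff measurableSet_Icc]
    exact integrableOn_const (isCompact_Icc.measure_lt_top.ne)
  have hvol : (volume (Set.Icc ((-1, -1) : ℝ × ℝ) (1, 1))).toReal = 4 := by
    rw [show (Set.Icc ((-1, -1) : ℝ × ℝ) (1, 1)) =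
        (Set.Icc (-1 : ℝ) 1) ×ˢ (Set.Icc (-1 : ℝ) 1) by
      rw [Set.Icc_prod_Icc]]
    rw [Measure.volume_eq_prod, Measure.prod_prod, Real.volume_Icc]
    norm_num [ENNReal.toReal_mul, ENNReal.toReal_ofReal]
  have hintle : |∫ y : ℝ × ℝ,
      F y * ((h ^ 2)⁻¹ * φ ((x.1 - y.1) / h) * φ ((x.2 - y.2) / h))| ≤ 4 * B := by
    calc |∫ y : ℝ × ℝ,
        F y * ((h ^ 2)⁻¹ * φ ((x.1 - y.1) / h) * φ ((x.2 - y.2) / h))|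
        ≤ ∫ y : ℝ × ℝ,
            Set.indicator (Set.Icc ((-1, -1) : ℝ × ℝ) (1, 1)) (fun _ => B) y := by
          rw [← Real.norm_eq_abs]
          exact norm_integral_le_of_norm_le hint
            (Filter.Eventually.of_forall fun y => by
              simpa only [Real.norm_eq_abs] using key y)
      _ = (volume (Set.Icc ((-1, -1) : ℝ × ℝ) (1, 1))).toReal • B :=
          integral_indicator_const _ measurableSet_Icc
      _ = 4 * B := by rw [hvol, smul_eq_mul]
  refine hintle.trans ?_
  -- final numeric computation
  have hrpow : (1 + r) ^ (-((k : ℕ) : ℝ)) = ((1 + r) ^ k)⁻¹ := by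
    rw [Real.rpow_neg (by positivity), Real.rpow_natCast]
  rw [hrpow]
  have hne : r ≠ 0 := ne_of_gt hrpos
  have hhe : h ≠ 0 := ne_of_gt hh
  have heq1 : 4 * B = (4 * 6 ^ (k + 2) * C₀ * C * M * h ^ k) / r ^ (k + 2) := by
    rw [hB, hT, div_pow, mul_pow]
    field_simp
    ring
  have hkey : (1 + r) ^ k ≤ 2 ^ k * r ^ (k + 2) := by
    calc (1 + r) ^ k ≤ (2 * r) ^ k := pow_le_pow_left₀ (by positivity) (by linarith) k
      _ = 2 ^ k * r ^ k := mul_pow 2 r k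
      _ ≤ 2 ^ k * r ^ (k + 2) := by
          have : r ^ k ≤ r ^ (k + 2) := pow_le_pow_right₀ (by linarith) (by omega)
          exact mul_le_mul_of_nonneg_left this (by positivity)
  have heq2 : 4 * 6 ^ (k + 2) * C₀ * C * 2 ^ k * M * h ^ k * ((1 + r) ^ k)⁻¹ =
      (4 * 6 ^ (k + 2) * C₀ * C * M * h ^ k) * 2 ^ k / (1 + r) ^ k := by
    ring
  rw [heq1, heq2]
  set A : ℝ := 4 * 6 ^ (k + 2) * C₀ * C * M * h ^ k with hA
  have hA0 : 0 ≤ A := by positivity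
  rw [div_le_div_iff₀ (by positivity) (by positivity)]
  calc A * (1 + r) ^ k ≤ A * (2 ^ k * r ^ (k + 2)) :=
        mul_le_mul_of_nonneg_left hkey hA0
    _ = A * 2 ^ k * r ^ (k + 2) := by ring
end
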